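/- More general master inequality: for every normed space X of dimension d, every real λ > 1 and every integer J ≥ 2, one has Γ(X) ≥ J^{-1}·(λ(1 + 2λ^{1-J}))^{-d}·γ(X). -/

import Mathlib

open MeasureTheory Metric

/-- `ballsUnion μ C` is the measure of the union of the closed balls encoded (center, radius)
by the finite collection `C`. -/
noncomputable def ballsUnion {X : Type*} [NormedAddCommGroup X] [MeasurableSpace X]
    (μ : Measure X) (C : Finset (X × ℝ)) : ℝ :=
  (μ (⋃ p ∈ C, closedBall p.1 p.2)).toReal

/-- A collection of (center, radius) pairs encodes pairwise disjoint closed balls. -/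
def DisjointBalls {X : Type*} [NormedAddCommGroup X] (S : Finset (X × ℝ)) : Prop :=
  (S : Set (X × ℝ)).Pairwise fun p q => Disjoint (closedBall p.1 p.2) (closedBall q.1 q.2)

/-- `Phi μ C` is the largest fraction of the measure of the union of the balls of `C`
occupied by a pairwise disjoint subcollection of `C`. -/
noncomputable def Phi {X : Type*} [NormedAddCommGroup X] [MeasurableSpace X]
    (μ : Measure X) (C : Finset (X × ℝ)) : ℝ :=
  ⨆ S : {S : Finset (X × ℝ) // S ⊆ C ∧ DisjointBalls S},
    ballsUnion μ S.1 / ballsUnion μ C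

/-- `vitaliGamma μ S` is the optimal Vitali covering constant `Γ(X; S)` for finite
collections of closed balls with radii in `S`. -/
noncomputable def vitaliGamma {X : Type*} [NormedAddCommGroup X] [MeasurableSpace X]
    (μ : Measure X) (S : Set ℝ) : ℝ :=
  ⨅ C : {C : Finset (X × ℝ) // C.Nonempty ∧ ∀ p ∈ C, p.2 ∈ S}, Phi μ C.1

open scoped ENNReal Pointwise

/-! A ball of radius `r` gets the scale `n` with `λ ^ n < r ≤ λ ^ (n + 1)`; sorting the scales
into their `J` residue classes, one class carries a `J⁻¹` fraction of the measure of the union,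
and within a class two different scales are at least a factor `λ ^ J` apart.
Inside one class we proceed greedily from the top scale `β`: the top balls, enlarged to the
common radius `s = β (1 + 2 λ^{-J})`, have a disjoint subfamily capturing a `γ` fraction of their
union (Haar measure is homogeneous, so `γ` does not depend on the radius), and every lower ball
meeting a chosen ball lies in its enlargement. The lower balls missing the chosen ones are
handled recursively. Shrinking the chosen balls back to their radii `> β / λ` costs the factor
`(λ (1 + 2 λ^{-J})) ^ d ≤ (λ (1 + 2 λ^{1-J})) ^ d`. -/

theorem closedBall_subset_closedBall_of_not_disjoint {α : Type*} [PseudoMetricSpace α]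
    {x y : α} {r R : ℝ} (h : ¬Disjoint (closedBall y r) (closedBall x R)) :
    closedBall y r ⊆ closedBall x (R + 2 * r) := by
  obtain ⟨z, hzy, hzx⟩ := Set.not_disjoint_iff.1 h
  rw [mem_closedBall, dist_comm] at hzy
  rw [mem_closedBall] at hzx
  exact closedBall_subset_closedBall' (by linarith [dist_triangle y z x])

theorem exists_measure_iUnion_le_card_mul {α ι : Type*} [MeasurableSpace α]
    (μ : Measure α) [Fintype ι] [Nonempty ι] (A : ι → Set α) :
    ∃ k, μ (⋃ i, A i) ≤ Fintype.card ι * μ (A k) := by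
  obtain ⟨k, -, hk⟩ := Finset.univ.exists_max_image (fun i => μ (A i)) Finset.univ_nonempty
  refine ⟨k, (measure_iUnion_fintype_le μ A).trans ?_⟩
  rw [← nsmul_eq_mul]
  exact Finset.sum_le_card_nsmul _ _ _ fun i _ => hk i (Finset.mem_univ i)

theorem pow_mul_zpow_le_zpow_of_dvd_sub {l : ℝ} (hl : 1 ≤ l) {J : ℕ} {m n : ℤ} (hmn : m < n)
    (hJ : (J : ℤ) ∣ n - m) : l ^ J * l ^ m ≤ l ^ n := by
  have hmJn : m + J ≤ n := by
    have := Int.le_of_dvd (by omega) hJ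
    omega
  calc l ^ J * l ^ m = l ^ (m + J) := by
        rw [zpow_add₀ (by positivity), zpow_natCast, mul_comm]
    _ ≤ l ^ n := zpow_le_zpow_right₀ hl hmJn

section

variable {X : Type*} [NormedAddCommGroup X]

def unionClosedBalls (C : Finset (X × ℝ)) : Set X :=
  ⋃ p ∈ C, closedBall p.1 p.2

theorem closedBall_subset_unionClosedBalls {C : Finset (X × ℝ)} {p : X × ℝ} (hp : p ∈ C) :
    closedBall p.1 p.2 ⊆ unionClosedBalls C :=
  Set.subset_iUnion₂ (s := fun p (_ : p ∈ C) => closedBall p.1 p.2) p hp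

theorem isCompact_unionClosedBalls [ProperSpace X] (C : Finset (X × ℝ)) :
    IsCompact (unionClosedBalls C) :=
  C.isCompact_biUnion fun p _ => isCompact_closedBall p.1 p.2

theorem DisjointBalls.union [DecidableEq X] {S S' : Finset (X × ℝ)} (hS : DisjointBalls S)
    (hS' : DisjointBalls S')
    (h : ∀ p ∈ S, ∀ q ∈ S', Disjoint (closedBall p.1 p.2) (closedBall q.1 q.2)) :
    DisjointBalls (S ∪ S') := by
  rw [DisjointBalls, Finset.coe_union, Set.pairwise_union]
  exact ⟨hS, hS', fun p hp q hq _ => ⟨h p hp q hq, (h p hp q hq).symm⟩⟩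

open Classical in
theorem unionClosedBalls_subset_union_of_top_scale {E Z : Finset (X × ℝ)} {b : X × ℝ → ℝ}
    {β κ : ℝ} (hβ : 0 ≤ β) (hκ : 0 < κ) (hZE : Z ⊆ E)
    (hEb : ∀ p ∈ E, p.2 ≤ b p ∧ b p ≤ β)
    (hZβ : ∀ q ∈ Z, b q = β) (hsep : ∀ p ∈ E, b p < β → κ * b p ≤ β) :
    unionClosedBalls E ⊆ (⋃ q ∈ E.filter (b · = β), closedBall q.1 (β * (1 + 2 / κ))) ∪
      unionClosedBalls (E.filter fun p =>
        b p < β ∧ ∀ q ∈ Z, Disjoint (closedBall p.1 p.2) (closedBall q.1 q.2)) := by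
  intro x hx
  obtain ⟨p, hp, hxp⟩ := Set.mem_iUnion₂.1 hx
  obtain ⟨hpb, hbβ⟩ := hEb p hp
  rcases hbβ.lt_or_eq with hlt | heq
  · by_cases hdisj : ∀ q ∈ Z, Disjoint (closedBall p.1 p.2) (closedBall q.1 q.2)
    · exact Or.inr <|
        closedBall_subset_unionClosedBalls (Finset.mem_filter.2 ⟨hp, hlt, hdisj⟩) hxp
    push Not at hdisj
    obtain ⟨q, hqZ, hpq⟩ := hdisj
    -- a lower ball has radius `≤ β / κ`, so it lies in the enlargement of any top ball it meets
    have hpκ : p.2 ≤ β / κ := by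
      rw [le_div_iff₀ hκ]
      nlinarith [hsep p hp hlt]
    have hq2 : q.2 ≤ β := hZβ q hqZ ▸ (hEb q (hZE hqZ)).1
    refine Or.inl (Set.mem_iUnion₂.2 ⟨q, Finset.mem_filter.2 ⟨hZE hqZ, hZβ q hqZ⟩,
      closedBall_subset_closedBall ?_ (closedBall_subset_closedBall_of_not_disjoint hpq hxp)⟩)
    linarith [show β * (1 + 2 / κ) = β + 2 * (β / κ) by ring]
  · refine Or.inl (Set.mem_iUnion₂.2 ⟨p, Finset.mem_filter.2 ⟨hp, heq⟩,
      closedBall_subset_closedBall ?_ hxp⟩)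
    nlinarith [show 0 ≤ 2 / κ by positivity]

section Measure

variable [MeasurableSpace X] (μ : Measure X)

theorem measure_unionClosedBalls_union [OpensMeasurableSpace X] [DecidableEq X]
    {S S' : Finset (X × ℝ)}
    (h : ∀ p ∈ S, ∀ q ∈ S', Disjoint (closedBall p.1 p.2) (closedBall q.1 q.2)) :
    μ (unionClosedBalls (S ∪ S')) = μ (unionClosedBalls S) + μ (unionClosedBalls S') := by
  rw [unionClosedBalls, Finset.set_biUnion_union]
  exact measure_union
    (Set.disjoint_iUnion₂_left.2 fun p hp =>
      Set.disjoint_iUnion₂_right.2 fun q hq => h p hp q hq)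
    (Finset.measurableSet_biUnion _ fun _ _ => measurableSet_closedBall)

theorem Phi_nonneg (C : Finset (X × ℝ)) : 0 ≤ Phi μ C :=
  Real.iSup_nonneg fun _ => div_nonneg ENNReal.toReal_nonneg ENNReal.toReal_nonneg

theorem vitaliGamma_nonneg (R : Set ℝ) : 0 ≤ vitaliGamma μ R :=
  Real.iInf_nonneg fun C => Phi_nonneg μ C.1

theorem vitaliGamma_le_Phi {R : Set ℝ} {C : Finset (X × ℝ)} (hC : C.Nonempty)
    (hR : ∀ p ∈ C, p.2 ∈ R) : vitaliGamma μ R ≤ Phi μ C :=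
  ciInf_le
    (f := fun C : {C : Finset (X × ℝ) // C.Nonempty ∧ ∀ p ∈ C, p.2 ∈ R} => Phi μ C.1)
    ⟨0, Set.forall_mem_range.2 fun C => Phi_nonneg μ C.1⟩ ⟨C, hC, hR⟩

theorem exists_disjointBalls_div_eq_Phi (C : Finset (X × ℝ)) :
    ∃ S ⊆ C, DisjointBalls S ∧ ballsUnion μ S / ballsUnion μ C = Phi μ C := by
  have : Finite {S // S ⊆ C ∧ DisjointBalls S} :=
    (C.powerset.finite_toSet.subset fun _ hS => Finset.mem_powerset.2 hS.1).to_subtype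
  have : Nonempty {S // S ⊆ C ∧ DisjointBalls S} :=
    ⟨⟨∅, Finset.empty_subset C, by simp [DisjointBalls]⟩⟩
  obtain ⟨⟨S, hSC, hS⟩, h⟩ := exists_eq_ciSup_of_finite
    (f := fun S : {S // S ⊆ C ∧ DisjointBalls S} => ballsUnion μ S.1 / ballsUnion μ C)
  exact ⟨S, hSC, hS, h⟩

variable [ProperSpace X] [IsFiniteMeasureOnCompacts μ]

theorem measure_unionClosedBalls_ne_top (C : Finset (X × ℝ)) : μ (unionClosedBalls C) ≠ ∞ :=
  (isCompact_unionClosedBalls C).measure_lt_top.ne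

theorem ballsUnion_mono {S C : Finset (X × ℝ)} (h : S ⊆ C) :
    ballsUnion μ S ≤ ballsUnion μ C :=
  ENNReal.toReal_mono (measure_unionClosedBalls_ne_top μ C)
    (measure_mono (Set.biUnion_subset_biUnion_left h))

theorem div_le_Phi {S C : Finset (X × ℝ)} (hS : S ⊆ C) (hdisj : DisjointBalls S) :
    ballsUnion μ S / ballsUnion μ C ≤ Phi μ C :=
  le_ciSup
    (f := fun S : {S // S ⊆ C ∧ DisjointBalls S} => ballsUnion μ S.1 / ballsUnion μ C)
    ⟨1, Set.forall_mem_range.2 fun T =>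
      div_le_one_of_le₀ (ballsUnion_mono μ T.2.1) ENNReal.toReal_nonneg⟩
    ⟨S, hS, hdisj⟩

theorem exists_disjointBalls_ofReal_vitaliGamma_mul_le {R : Set ℝ} {C : Finset (X × ℝ)}
    (hC : C.Nonempty) (hR : ∀ p ∈ C, p.2 ∈ R) :
    ∃ S ⊆ C, DisjointBalls S ∧
      ENNReal.ofReal (vitaliGamma μ R) * μ (unionClosedBalls C) ≤ μ (unionClosedBalls S) := by
  obtain ⟨S, hSC, hS, hΦ⟩ := exists_disjointBalls_div_eq_Phi μ C
  have hγ : vitaliGamma μ R * ballsUnion μ C ≤ ballsUnion μ S :=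
    mul_le_of_le_div₀ ENNReal.toReal_nonneg ENNReal.toReal_nonneg
      (hΦ ▸ vitaliGamma_le_Phi μ hC hR)
  refine ⟨S, hSC, hS, ?_⟩
  rw [← ENNReal.ofReal_toReal (measure_unionClosedBalls_ne_top μ C),
    ← ENNReal.ofReal_toReal (measure_unionClosedBalls_ne_top μ S),
    ← ENNReal.ofReal_mul (vitaliGamma_nonneg μ R)]
  exact ENNReal.ofReal_le_ofReal hγ

theorem div_le_Phi_of_ofReal_mul_le {S C : Finset (X × ℝ)} (hS : S ⊆ C)
    (hdisj : DisjointBalls S) {a K : ℝ} (ha : 0 ≤ a) (hK : 0 < K)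
    (hC : 0 < μ (unionClosedBalls C))
    (h : ENNReal.ofReal a * μ (unionClosedBalls C) ≤
      ENNReal.ofReal K * μ (unionClosedBalls S)) :
    a / K ≤ Phi μ C := by
  have hCpos : 0 < ballsUnion μ C :=
    ENNReal.toReal_pos hC.ne' (measure_unionClosedBalls_ne_top μ C)
  have hreal := ENNReal.toReal_mono
    (ENNReal.mul_ne_top ENNReal.ofReal_ne_top (measure_unionClosedBalls_ne_top μ S)) h
  rw [ENNReal.toReal_mul, ENNReal.toReal_mul, ENNReal.toReal_ofReal ha,
    ENNReal.toReal_ofReal hK.le] at hreal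
  change a * ballsUnion μ C ≤ K * ballsUnion μ S at hreal
  refine le_trans ?_ (div_le_Phi μ hS hdisj)
  rw [div_le_div_iff₀ hK hCpos]
  linarith

end Measure

section Haar

variable [NormedSpace ℝ X] [FiniteDimensional ℝ X] [MeasurableSpace X] [BorelSpace X]
  (μ : Measure X) [μ.IsAddHaarMeasure]

theorem measure_closedBall_le_ofReal_pow_mul (x : X) {r R t : ℝ} (hr : 0 ≤ r) (ht : 0 ≤ t)
    (h : R ≤ t * r) :
    μ (closedBall x R) ≤ ENNReal.ofReal (t ^ Module.finrank ℝ X) * μ (closedBall x r) :=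
  calc μ (closedBall x R) ≤ μ (closedBall x (t * r)) :=
        measure_mono (closedBall_subset_closedBall h)
    _ = _ := by rw [μ.addHaar_closedBall_mul x ht hr, μ.addHaar_closedBall_center x r]

theorem measure_biUnion_closedBall_le_of_disjointBalls {Z : Finset (X × ℝ)}
    (hZ : DisjointBalls Z) {s t : ℝ} (ht : 0 ≤ t)
    (h : ∀ q ∈ Z, 0 ≤ q.2 ∧ s ≤ t * q.2) :
    μ (⋃ q ∈ Z, closedBall q.1 s) ≤
      ENNReal.ofReal (t ^ Module.finrank ℝ X) * μ (unionClosedBalls Z) :=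
  calc μ (⋃ q ∈ Z, closedBall q.1 s) ≤ ∑ q ∈ Z, μ (closedBall q.1 s) :=
        measure_biUnion_finset_le Z _
    _ ≤ ∑ q ∈ Z, ENNReal.ofReal (t ^ Module.finrank ℝ X) * μ (closedBall q.1 q.2) :=
        Finset.sum_le_sum fun q hq =>
          measure_closedBall_le_ofReal_pow_mul μ q.1 (h q hq).1 ht (h q hq).2
    _ = _ := by
        rw [← Finset.mul_sum, unionClosedBalls,
          measure_biUnion_finset hZ fun _ _ => measurableSet_closedBall]

theorem exists_pairwiseDisjoint_closedBall_ofReal_vitaliGamma_mul_le {ι : Type*} (T : Finset ι)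
    (c : ι → X) {s : ℝ} (hs : 0 < s) :
    ∃ Z ⊆ T, (Z : Set ι).PairwiseDisjoint (fun i => closedBall (c i) s) ∧
      ENNReal.ofReal (vitaliGamma μ {1}) * μ (⋃ i ∈ T, closedBall (c i) s) ≤
        μ (⋃ i ∈ Z, closedBall (c i) s) := by
  classical
  rcases T.eq_empty_or_nonempty with rfl | hT
  · exact ⟨∅, subset_rfl, by simp, by simp⟩
  set f : ι → X × ℝ := fun i => (s⁻¹ • c i, 1)
  have hball (i : ι) : closedBall (c i) s = s • closedBall (f i).1 (f i).2 := by
    rw [smul_closedBall' hs.ne', smul_inv_smul₀ hs.ne', Real.norm_of_nonneg hs.le, mul_one]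
  have hunion (F : Finset ι) :
      ⋃ i ∈ F, closedBall (c i) s = s • unionClosedBalls (F.image f) := by
    rw [unionClosedBalls, Finset.set_biUnion_finset_image, Set.smul_set_iUnion₂]
    exact Set.iUnion₂_congr fun i _ => hball i
  obtain ⟨S, hST, hS, hγ⟩ :=
    exists_disjointBalls_ofReal_vitaliGamma_mul_le μ (R := {1}) (hT.image f) (by simp [f])
  obtain ⟨Z, hZT, hinj, rfl⟩ := Finset.exists_subset_injOn_image_eq_of_surjOn (T : Set ι) S
    fun p hp => by simpa using hST hp
  refine ⟨Z, by simpa using hZT, fun i hi j hj hij => ?_, ?_⟩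
  · rw [Function.onFun, hball, hball, ← Set.image_smul, ← Set.image_smul]
    exact (Set.disjoint_image_iff (smul_right_injective X hs.ne')).2 <|
      hS (Finset.mem_image_of_mem f hi) (Finset.mem_image_of_mem f hj) (hinj.ne hi hj hij)
  · rw [hunion, hunion, μ.addHaar_smul_of_nonneg hs.le, μ.addHaar_smul_of_nonneg hs.le,
      mul_left_comm]
    gcongr

theorem exists_disjointBalls_ofReal_vitaliGamma_mul_le_of_radii_mem_Icc (T : Finset (X × ℝ))
    {ρ s : ℝ} (hρ : 0 < ρ) (hρs : ρ ≤ s) (hT : ∀ q ∈ T, q.2 ∈ Set.Icc ρ s) :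
    ∃ Z ⊆ T, DisjointBalls Z ∧
      ENNReal.ofReal (vitaliGamma μ {1}) * μ (⋃ q ∈ T, closedBall q.1 s) ≤
        ENNReal.ofReal ((s / ρ) ^ Module.finrank ℝ X) * μ (unionClosedBalls Z) := by
  obtain ⟨Z, hZT, hZ, hγ⟩ :=
    exists_pairwiseDisjoint_closedBall_ofReal_vitaliGamma_mul_le μ T Prod.fst (hρ.trans_le hρs)
  have hZ' : DisjointBalls Z := fun p hp q hq hpq =>
    (hZ hp hq hpq).mono (closedBall_subset_closedBall (hT p (hZT hp)).2)
      (closedBall_subset_closedBall (hT q (hZT hq)).2)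
  refine ⟨Z, hZT, hZ', hγ.trans <| measure_biUnion_closedBall_le_of_disjointBalls μ hZ'
    (div_nonneg (hρ.le.trans hρs) hρ.le) fun q hq => ⟨hρ.le.trans (hT q (hZT hq)).1, ?_⟩⟩
  rw [div_mul_eq_mul_div, le_div_iff₀ hρ]
  exact mul_le_mul_of_nonneg_left (hT q (hZT hq)).1 (hρ.le.trans hρs)

theorem exists_disjointBalls_of_separated_scales {l κ : ℝ} (hl : 1 < l) (hκ : 0 < κ)
    (b : X × ℝ → ℝ) (E : Finset (X × ℝ))
    (hEb : ∀ p ∈ E, p.2 ∈ Set.Ioc (b p / l) (b p))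
    (hsep : ∀ p ∈ E, ∀ q ∈ E, b p < b q → κ * b p ≤ b q) :
    ∃ S ⊆ E, DisjointBalls S ∧
      ENNReal.ofReal (vitaliGamma μ {1}) * μ (unionClosedBalls E) ≤
        ENNReal.ofReal ((l * (1 + 2 / κ)) ^ Module.finrank ℝ X) * μ (unionClosedBalls S) := by
  classical
  induction E using Finset.strongInduction with
  | H E ih =>
  rcases E.eq_empty_or_nonempty with rfl | hE
  · exact ⟨∅, subset_rfl, by simp [DisjointBalls], by simp [unionClosedBalls]⟩
  obtain ⟨p₀, hp₀, hmax⟩ := E.exists_max_image b hE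
  set β := b p₀
  set s := β * (1 + 2 / κ)
  have hl0 : 0 < l := zero_lt_one.trans hl
  have hβ : 0 < β := by
    obtain ⟨h1, h2⟩ := hEb p₀ hp₀
    rw [div_lt_iff₀ hl0] at h1
    nlinarith
  have hβs : β ≤ s := le_mul_of_one_le_right hβ.le (le_add_of_nonneg_right (by positivity))
  set T := E.filter (b · = β)
  obtain ⟨Z, hZT, hZ, hZγ⟩ :=
    exists_disjointBalls_ofReal_vitaliGamma_mul_le_of_radii_mem_Icc μ T (div_pos hβ hl0)
      ((div_le_self hβ.le hl.le).trans hβs) fun q hq => by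
        obtain ⟨hqE, hqβ⟩ := Finset.mem_filter.1 hq
        exact ⟨hqβ ▸ (hEb q hqE).1.le, (hqβ ▸ (hEb q hqE).2).trans hβs⟩
  set E' := E.filter fun p =>
    b p < β ∧ ∀ q ∈ Z, Disjoint (closedBall p.1 p.2) (closedBall q.1 q.2)
  have hE'E : E' ⊂ E := Finset.filter_ssubset.2 ⟨p₀, hp₀, fun h => h.1.ne rfl⟩
  obtain ⟨S', hS'E', hS', hS'γ⟩ := ih E' hE'E (fun p hp => hEb p (hE'E.subset hp))
    fun p hp q hq => hsep p (hE'E.subset hp) q (hE'E.subset hq)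
  have hcover := unionClosedBalls_subset_union_of_top_scale hβ.le hκ
    (hZT.trans (Finset.filter_subset _ _)) (fun p hp => ⟨(hEb p hp).2, hmax p hp⟩)
    (fun q hq => (Finset.mem_filter.1 (hZT hq)).2)
    fun p hp hlt => hsep p hp p₀ hp₀ hlt
  have hcross : ∀ q ∈ Z, ∀ p ∈ S', Disjoint (closedBall q.1 q.2) (closedBall p.1 p.2) :=
    fun q hq p hp => ((Finset.mem_filter.1 (hS'E' hp)).2.2 q hq).symm
  refine ⟨Z ∪ S', Finset.union_subset (hZT.trans (Finset.filter_subset _ _))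
    (hS'E'.trans hE'E.subset), hZ.union hS' hcross, ?_⟩
  have hratio : s / (β / l) = l * (1 + 2 / κ) := by
    simp only [s]
    field_simp
  rw [measure_unionClosedBalls_union μ hcross, mul_add]
  calc ENNReal.ofReal (vitaliGamma μ {1}) * μ (unionClosedBalls E)
      ≤ ENNReal.ofReal (vitaliGamma μ {1}) *
          (μ (⋃ q ∈ T, closedBall q.1 s) + μ (unionClosedBalls E')) := by
        gcongr
        exact (measure_mono hcover).trans (measure_union_le _ _)
    _ ≤ _ := by
        rw [mul_add]
        exact add_le_add (hratio ▸ hZγ) hS'γ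

theorem exists_disjointBalls_of_pos_radii {l : ℝ} (hl : 1 < l) {J : ℕ} (hJ : 0 < J)
    (C : Finset (X × ℝ)) (hC : ∀ p ∈ C, 0 < p.2) :
    ∃ S ⊆ C, DisjointBalls S ∧
      ENNReal.ofReal (vitaliGamma μ {1}) * μ (unionClosedBalls C) ≤
        ENNReal.ofReal (J * (l * (1 + 2 / l ^ J)) ^ Module.finrank ℝ X) *
          μ (unionClosedBalls S) := by
  classical
  have hl0 : l ≠ 0 := by positivity
  have : NeZero J := ⟨hJ.ne'⟩
  have hscale (p : X × ℝ) : ∃ n : ℤ, p ∈ C → p.2 ∈ Set.Ioc (l ^ n) (l ^ (n + 1)) :=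
    if hp : p ∈ C then (exists_mem_Ioc_zpow (hC p hp) hl).imp fun _ h _ => h
    else ⟨0, fun h => absurd h hp⟩
  choose n hn using hscale
  let Ck : ZMod J → Finset (X × ℝ) := fun k => C.filter fun p => (n p : ZMod J) = k
  obtain ⟨k, hk⟩ := exists_measure_iUnion_le_card_mul μ fun k => unionClosedBalls (Ck k)
  rw [ZMod.card] at hk
  have hcover : unionClosedBalls C ⊆ ⋃ k, unionClosedBalls (Ck k) := fun x hx => by
    obtain ⟨p, hp, hxp⟩ := Set.mem_iUnion₂.1 hx
    have hpk : p ∈ Ck (n p) := Finset.mem_filter.2 ⟨hp, rfl⟩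
    exact Set.mem_iUnion.2 ⟨_, closedBall_subset_unionClosedBalls hpk hxp⟩
  obtain ⟨S, hSC, hS, hγ⟩ := exists_disjointBalls_of_separated_scales μ hl
    (pow_pos (by positivity) J) (fun p => l ^ (n p + 1)) (Ck k)
    (fun p hp => by
      simpa [zpow_add_one₀ hl0, mul_div_cancel_right₀ _ hl0] using
        hn p (Finset.mem_filter.1 hp).1)
    fun p hp q hq hpq => by
      have hpq' : n p + 1 < n q + 1 := (zpow_lt_zpow_iff_right₀ hl).1 hpq
      have hdvd : (J : ℤ) ∣ (n q + 1) - (n p + 1) := by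
        rw [add_sub_add_right_eq_sub, ← ZMod.intCast_eq_intCast_iff_dvd_sub,
          (Finset.mem_filter.1 hp).2, (Finset.mem_filter.1 hq).2]
      exact pow_mul_zpow_le_zpow_of_dvd_sub hl.le hpq' hdvd
  refine ⟨S, hSC.trans (Finset.filter_subset _ _), hS, ?_⟩
  calc ENNReal.ofReal (vitaliGamma μ {1}) * μ (unionClosedBalls C)
      ≤ ENNReal.ofReal (vitaliGamma μ {1}) * (J * μ (unionClosedBalls (Ck k))) := by
        gcongr
        exact (measure_mono hcover).trans hk
    _ = J * (ENNReal.ofReal (vitaliGamma μ {1}) * μ (unionClosedBalls (Ck k))) := by ring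
    _ ≤ J * (ENNReal.ofReal ((l * (1 + 2 / l ^ J)) ^ Module.finrank ℝ X) *
          μ (unionClosedBalls S)) := by gcongr
    _ = _ := by
        rw [ENNReal.ofReal_mul (by positivity), ENNReal.ofReal_natCast, mul_assoc]

end Haar

end

/-- Master inequality: for every normed space `X` of dimension `d`, real `λ > 1` and
integer `J ≥ 2`, `Γ(X) ≥ J⁻¹·(λ(1 + 2λ^{1-J}))^{-d}·γ(X)`. -/
theorem stmt_17 {X : Type*} [NormedAddCommGroup X] [NormedSpace ℝ X] [FiniteDimensional ℝ X]
    [MeasurableSpace X] [BorelSpace X] (μ : Measure X) [μ.IsAddHaarMeasure]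
    (d : ℕ) (hd : Module.finrank ℝ X = d) (l : ℝ) (hl : 1 < l) (J : ℕ) (hJ : 2 ≤ J) :
    (J : ℝ)⁻¹ * ((l * (1 + 2 * l ^ (1 - (J : ℝ))))⁻¹) ^ d * vitaliGamma μ {1}
      ≤ vitaliGamma μ (Set.Ioi 0) := by
  have hl0 : 0 < l := zero_lt_one.trans hl
  -- the greedy argument gives the better factor `λ ^ (-J) ≤ λ ^ (1 - J)`
  have hfactor : l * (1 + 2 / l ^ J) ≤ l * (1 + 2 * l ^ (1 - (J : ℝ))) := by
    rw [Real.rpow_sub hl0, Real.rpow_one, Real.rpow_natCast, ← mul_div_assoc]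
    gcongr
    linarith
  have : Nonempty {C : Finset (X × ℝ) // C.Nonempty ∧ ∀ p ∈ C, p.2 ∈ Set.Ioi 0} :=
    ⟨⟨{(0, 1)}, Finset.singleton_nonempty _, by simp⟩⟩
  refine le_ciInf fun ⟨C, ⟨p, hp⟩, hC⟩ => ?_
  obtain ⟨S, hSC, hS, hγ⟩ := exists_disjointBalls_of_pos_radii μ hl (by omega : 0 < J) C hC
  rw [hd] at hγ
  calc (J : ℝ)⁻¹ * ((l * (1 + 2 * l ^ (1 - (J : ℝ))))⁻¹) ^ d * vitaliGamma μ {1}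
      = vitaliGamma μ {1} / (J * (l * (1 + 2 * l ^ (1 - (J : ℝ)))) ^ d) := by
        rw [inv_pow, ← mul_inv, mul_comm, div_eq_mul_inv]
    _ ≤ vitaliGamma μ {1} / (J * (l * (1 + 2 / l ^ J)) ^ d) := by
        gcongr
        exact vitaliGamma_nonneg μ _
    _ ≤ Phi μ C :=
      div_le_Phi_of_ofReal_mul_le μ hSC hS (vitaliGamma_nonneg μ _) (by positivity)
        ((measure_closedBall_pos μ p.1 (hC p hp)).trans_le
          (measure_mono (closedBall_subset_unionClosedBalls hp))) hγ
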